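/- Let w ∈ ℂ, τ in the upper half-plane, d an odd positive integer, and k an integer. Then ∑_{ℓ=0}^{d−1} e^{−4iπkℓ/d} θ₍₀₎(w + ℓ/d, τ) = d · e^{2iπ k² τ} · e^{4iπ k w} · θ₍₀₎(dw + dkτ, d²τ), and likewise ∑_{ℓ=0}^{d−1} e^{−4iπkℓ/d} θ₍₁₎(w + ℓ/d, τ) = d · e^{2iπ k² τ} · e^{4iπ k w} · θ₍₁₎(dw + dkτ, d²τ). -/

import Mathlib

open Finset

/-- Theta with characteristic `θ₍₀₎(z, τ) = ∑_{m even} exp(iπ(τ/2)m²) exp(2iπmz)`. -/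
noncomputable def theta0 (z τ : ℂ) : ℂ :=
  ∑' m : ℤ, if Even m then
    Complex.exp ((Real.pi : ℂ) * Complex.I * (τ / 2) * (m : ℂ) ^ 2) *
      Complex.exp (2 * (Real.pi : ℂ) * Complex.I * (m : ℂ) * z)
  else 0

/-- Theta with characteristic `θ₍₁₎(z, τ) = ∑_{m odd} exp(iπ(τ/2)m²) exp(2iπmz)`. -/
noncomputable def theta1 (z τ : ℂ) : ℂ :=
  ∑' m : ℤ, if Odd m then
    Complex.exp ((Real.pi : ℂ) * Complex.I * (τ / 2) * (m : ℂ) ^ 2) *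
      Complex.exp (2 * (Real.pi : ℂ) * Complex.I * (m : ℂ) * z)
  else 0

/-!
Expanding `θ(w + l/d, τ)` as a `q`-series and summing over `l` first, the inner sum
`∑_l exp(2πi (m - 2k) l / d)` is `d` or `0` according to whether `d ∣ m - 2k`, so only the
terms `m = 2k + dn` survive. Completing the square turns these into the terms of the theta series
at `(dw + dkτ, d²τ)`, and since `d` is odd, `2k + dn` has the parity of `n`, so the
characteristic is preserved.
-/

open Complex Real

theorem sum_range_cexp_two_pi_I_mul_div {d : ℕ} (hd : d ≠ 0) (a : ℤ) :
    ∑ l ∈ range d, cexp (2 * π * I * a * l / d) = if (d : ℤ) ∣ a then (d : ℂ) else 0 := by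
  have hζ := isPrimitiveRoot_exp d hd
  set ζ := cexp (2 * π * I / d)
  have hterm (l : ℕ) : cexp (2 * π * I * a * l / d) = (ζ ^ a) ^ l := by
    rw [← zpow_natCast, ← zpow_mul, ← exp_int_mul]
    congr 1
    push_cast
    ring
  simp_rw [hterm]
  split_ifs with hda
  · simp [(hζ.zpow_eq_one_iff_dvd a).mpr hda]
  · have hpow : (ζ ^ a) ^ d = 1 := by
      rw [← zpow_natCast, ← zpow_mul, mul_comm, zpow_mul, zpow_natCast, hζ.pow_eq_one, one_zpow]
    rw [geom_sum_eq (mt (hζ.zpow_eq_one_iff_dvd a).mp hda), hpow, sub_self, zero_div]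

theorem summable_mul_cexp_real_mul_I {a : ℤ → ℂ} (ha : Summable a) (x : ℤ → ℝ) :
    Summable fun m => a m * cexp (x m * I) :=
  ha.norm.of_norm_bounded fun m => by rw [norm_mul, norm_exp_ofReal_mul_I, mul_one]

theorem sum_range_cexp_neg_mul_tsum {a : ℤ → ℂ} (ha : Summable a) {d : ℕ} (hd : d ≠ 0) (j : ℤ) :
    ∑ l ∈ range d, cexp (-(2 * π * I * j * l / d)) * ∑' m, a m * cexp (2 * π * I * m * l / d) =
      d * ∑' n, a (j + d * n) := by
  have hsum (l : ℕ) : Summable fun m => a m * cexp (2 * π * I * m * l / d) := by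
    convert summable_mul_cexp_real_mul_I ha fun m => 2 * π * m * l / d using 4
    push_cast
    ring
  have hinj : Function.Injective fun n : ℤ => j + d * n := by
    intro n n' h
    simpa [hd] using h
  calc ∑ l ∈ range d, cexp (-(2 * π * I * j * l / d)) * ∑' m, a m * cexp (2 * π * I * m * l / d)
      = ∑' m, a m * ∑ l ∈ range d, cexp (2 * π * I * ↑(m - j) * l / d) := by
        simp_rw [← tsum_mul_left]
        rw [← Summable.tsum_finsetSum fun l _ => (hsum l).mul_left _]
        refine tsum_congr fun m => ?_
        rw [mul_sum]
        refine sum_congr rfl fun l _ => ?_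
        rw [mul_left_comm, ← Complex.exp_add]
        congr 2
        push_cast
        ring
    _ = ∑' m, (Set.range fun n : ℤ => j + d * n).indicator (fun m => d * a m) m := by
        refine tsum_congr fun m => ?_
        rw [sum_range_cexp_two_pi_I_mul_div hd]
        by_cases hdvd : (d : ℤ) ∣ m - j
        · obtain ⟨n, hn⟩ := hdvd
          rw [if_pos ⟨n, hn⟩, Set.indicator_of_mem (Set.mem_range.mpr ⟨n, by omega⟩), mul_comm]
        · rw [if_neg hdvd, Set.indicator_of_notMem, mul_zero]
          rintro ⟨n, rfl⟩
          exact hdvd ⟨n, by ring⟩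
    _ = d * ∑' n, a (j + d * n) := by
        rw [← _root_.tsum_subtype, tsum_range (fun m => (d : ℂ) * a m) hinj, tsum_mul_left]

noncomputable def jacobiTheta₂On (s : Set ℤ) (z τ : ℂ) : ℂ :=
  ∑' n, s.indicator (jacobiTheta₂_term · z τ) n

theorem jacobiTheta₂_term_add_left (n : ℤ) (z u τ : ℂ) :
    jacobiTheta₂_term n (z + u) τ = jacobiTheta₂_term n z τ * cexp (2 * π * I * n * u) := by
  rw [jacobiTheta₂_term, jacobiTheta₂_term, ← Complex.exp_add]
  ring_nf

theorem jacobiTheta₂_term_add_mul (j d n : ℤ) (z τ : ℂ) :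
    jacobiTheta₂_term (j + d * n) z τ =
      jacobiTheta₂_term j z τ * jacobiTheta₂_term n (d * z + d * j * τ) (d ^ 2 * τ) := by
  rw [jacobiTheta₂_term, jacobiTheta₂_term, jacobiTheta₂_term, ← Complex.exp_add]
  push_cast
  ring_nf

theorem sum_range_cexp_neg_mul_jacobiTheta₂On (s : Set ℤ) (w : ℂ) {τ : ℂ} (hτ : 0 < τ.im)
    {d : ℕ} (hd : d ≠ 0) {j : ℤ} (hs : ∀ n, j + d * n ∈ s ↔ n ∈ s) :
    ∑ l ∈ range d, cexp (-(2 * π * I * j * l / d)) * jacobiTheta₂On s (w + l / d) τ =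
      d * jacobiTheta₂_term j w τ * jacobiTheta₂On s (d * w + d * j * τ) (d ^ 2 * τ) := by
  set a := s.indicator (jacobiTheta₂_term · w τ)
  have ha : Summable a := ((summable_jacobiTheta₂_term_iff w τ).mpr hτ).indicator s
  have hshift (l : ℕ) :
      jacobiTheta₂On s (w + l / d) τ = ∑' m, a m * cexp (2 * π * I * m * l / d) := by
    refine tsum_congr fun m => ?_
    by_cases hm : m ∈ s
    · simp [a, hm, jacobiTheta₂_term_add_left, mul_div_assoc]
    · simp [a, hm]
  have halias (n : ℤ) : a (j + d * n) = jacobiTheta₂_term j w τ *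
      s.indicator (jacobiTheta₂_term · (d * w + d * j * τ) (d ^ 2 * τ)) n := by
    by_cases hn : n ∈ s
    · simp [a, hn, (hs n).mpr hn, jacobiTheta₂_term_add_mul]
    · simp [a, hn, mt (hs n).mp hn]
  simp_rw [hshift, sum_range_cexp_neg_mul_tsum ha hd, halias, tsum_mul_left, mul_assoc]
  rfl

theorem sum_range_cexp_mul_jacobiTheta₂On_half (s : Set ℤ) (w : ℂ) {τ : ℂ} (hτ : 0 < τ.im)
    {d : ℕ} (hd : d ≠ 0) {k : ℤ} (hs : ∀ n, 2 * k + d * n ∈ s ↔ n ∈ s) :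
    ∑ l ∈ range d, cexp (-4 * π * I * k * l / d) * jacobiTheta₂On s (w + l / d) (τ / 2) =
      d * cexp (2 * π * I * k ^ 2 * τ) * cexp (4 * π * I * k * w) *
        jacobiTheta₂On s (d * w + d * k * τ) (d ^ 2 * τ / 2) := by
  have h2k : jacobiTheta₂_term (2 * k) w (τ / 2) =
      cexp (2 * π * I * k ^ 2 * τ) * cexp (4 * π * I * k * w) := by
    rw [jacobiTheta₂_term, ← Complex.exp_add]
    push_cast
    ring_nf
  calc _ = ∑ l ∈ range d,
        cexp (-(2 * π * I * (2 * k : ℤ) * l / d)) * jacobiTheta₂On s (w + l / d) (τ / 2) :=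
        sum_congr rfl fun l _ => by push_cast; ring_nf
    _ = _ := sum_range_cexp_neg_mul_jacobiTheta₂On s w (by simpa using hτ) hd hs
    _ = _ := by
        rw [h2k, ← mul_assoc]
        push_cast
        ring_nf

theorem tsum_ite_eq_jacobiTheta₂On (p : ℤ → Prop) [DecidablePred p] (z τ : ℂ) :
    ∑' m : ℤ, (if p m then cexp (π * I * (τ / 2) * m ^ 2) * cexp (2 * π * I * m * z) else 0) =
      jacobiTheta₂On {m | p m} z (τ / 2) := by
  refine tsum_congr fun m => ?_
  by_cases hm : p m
  · simp only [hm, if_true, Set.indicator_of_mem (Set.mem_ofPred.mpr hm), jacobiTheta₂_term,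
      ← Complex.exp_add]
    ring_nf
  · simp [hm]

theorem fourier_sum_theta_char_general (w τ : ℂ) (hτ : 0 < τ.im) (d : ℕ) (hd : Odd d)
    (k : ℤ) :
    (∑ l ∈ Finset.range d,
      Complex.exp (-4 * (Real.pi : ℂ) * Complex.I * (k : ℂ) * (l : ℂ) / d) *
        theta0 (w + (l : ℂ) / d) τ =
      (d : ℂ) * Complex.exp (2 * (Real.pi : ℂ) * Complex.I * (k : ℂ) ^ 2 * τ) *
        Complex.exp (4 * (Real.pi : ℂ) * Complex.I * (k : ℂ) * w) *
        theta0 ((d : ℂ) * w + (d : ℂ) * (k : ℂ) * τ) ((d : ℂ) ^ 2 * τ)) ∧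
    (∑ l ∈ Finset.range d,
      Complex.exp (-4 * (Real.pi : ℂ) * Complex.I * (k : ℂ) * (l : ℂ) / d) *
        theta1 (w + (l : ℂ) / d) τ =
      (d : ℂ) * Complex.exp (2 * (Real.pi : ℂ) * Complex.I * (k : ℂ) ^ 2 * τ) *
        Complex.exp (4 * (Real.pi : ℂ) * Complex.I * (k : ℂ) * w) *
        theta1 ((d : ℂ) * w + (d : ℂ) * (k : ℂ) * τ) ((d : ℂ) ^ 2 * τ)) := by
  have hd0 : d ≠ 0 := hd.pos.ne'
  simp only [theta0, theta1, tsum_ite_eq_jacobiTheta₂On]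
  constructor
  · exact sum_range_cexp_mul_jacobiTheta₂On_half _ w hτ hd0 fun n => by simp [parity_simps, hd]
  · refine sum_range_cexp_mul_jacobiTheta₂On_half _ w hτ hd0 fun n => ?_
    simp only [Set.mem_ofPred_eq, ← Int.not_even_iff_odd]
    simp [parity_simps, hd]

/-- Lemma 3.3: the finite Fourier transforms of `θ₍₀₎` and `θ₍₁₎`. -/
theorem fourier_sum_theta_char (w τ : ℂ) (hτ : 0 < τ.im) (d : ℕ) (hd : Odd d)
    (hd0 : 0 < d) (k : ℤ) :
    (∑ l ∈ Finset.range d,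
      Complex.exp (-4 * (Real.pi : ℂ) * Complex.I * (k : ℂ) * (l : ℂ) / d) *
        theta0 (w + (l : ℂ) / d) τ =
      (d : ℂ) * Complex.exp (2 * (Real.pi : ℂ) * Complex.I * (k : ℂ) ^ 2 * τ) *
        Complex.exp (4 * (Real.pi : ℂ) * Complex.I * (k : ℂ) * w) *
        theta0 ((d : ℂ) * w + (d : ℂ) * (k : ℂ) * τ) ((d : ℂ) ^ 2 * τ)) ∧
    (∑ l ∈ Finset.range d,
      Complex.exp (-4 * (Real.pi : ℂ) * Complex.I * (k : ℂ) * (l : ℂ) / d) *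
        theta1 (w + (l : ℂ) / d) τ =
      (d : ℂ) * Complex.exp (2 * (Real.pi : ℂ) * Complex.I * (k : ℂ) ^ 2 * τ) *
        Complex.exp (4 * (Real.pi : ℂ) * Complex.I * (k : ℂ) * w) *
        theta1 ((d : ℂ) * w + (d : ℂ) * (k : ℂ) * τ) ((d : ℂ) ^ 2 * τ)) :=
  fourier_sum_theta_char_general w τ hτ d hd k
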